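/- arXiv:1505.02415 — 7 statements merged into one kernel-verified Lean document; each statement's English description precedes it below -/
import Mathlib

section
/- A point (s,p) ∈ ℂ² lies in the symmetrized bidisc Γ = {(z+w, zw) : |z| ≤ 1, |w| ≤ 1} if and only if |s| ≤ 2 and |s - conj(s)·p| ≤ 1 - |p|². -/
/-!
Write `s = z + w`, `p = z * w`. The identity
`s - conj s * p = (1 - |w|²) z + (1 - |z|²) w` together with
`1 - a²b² - a(1 - b²) - b(1 - a²) = (1 - a)(1 - b)(1 - ab)` for `a = |z|`, `b = |w|` gives the
forward direction by the triangle inequality. Conversely, let `z, w` be the roots of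
`t² - s t + p` with `|w| ≤ |z|`. If `|z| > 1`, the reverse triangle inequality forces `|z| |w| = 1`,
hence `s = conj s * p`; then `w` is a positive multiple of `z`, so `|s| = |z| + |w| > 2`.
-/

open Complex ComplexConjugate

/-- The symmetrized bidisc. -/
def symGamma : Set (ℂ × ℂ) :=
  {x | ∃ z w : ℂ, ‖z‖ ≤ 1 ∧ ‖w‖ ≤ 1 ∧ x = (z + w, z * w)}

open Polynomial in
theorem exists_add_eq_and_mul_eq {K : Type*} [Field K] [IsAlgClosed K] (s p : K) :
    ∃ z w : K, z + w = s ∧ z * w = p := by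
  have hdeg : (X ^ 2 - C s * X + C p : K[X]).degree = 2 := by compute_degree!
  obtain ⟨z, hz⟩ := IsAlgClosed.exists_root _ (hdeg ▸ two_ne_zero)
  simp only [IsRoot, eval_add, eval_sub, eval_mul, eval_pow, eval_X, eval_C] at hz
  exact ⟨z, s - z, by ring, by linear_combination -hz⟩

theorem add_sub_conj_add_mul_mul (z w : ℂ) :
    (z + w) - conj (z + w) * (z * w) = (1 - ‖w‖ ^ 2) • z + (1 - ‖z‖ ^ 2) • w := by
  simp only [Complex.real_smul, ofReal_sub, ofReal_one, ofReal_pow, ← mul_conj', map_add]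
  ring

theorem one_sub_mul_sq_sub_eq (a b : ℝ) :
    1 - (a * b) ^ 2 - ((1 - b ^ 2) * a + (1 - a ^ 2) * b) = (1 - a) * (1 - b) * (1 - a * b) := by
  ring

theorem norm_add_sub_conj_mul_le {z w : ℂ} (hz : ‖z‖ ≤ 1) (hw : ‖w‖ ≤ 1) :
    ‖(z + w) - conj (z + w) * (z * w)‖ ≤ 1 - ‖z * w‖ ^ 2 := by
  have hzw : ‖z‖ * ‖w‖ ≤ 1 := mul_le_one₀ hz (norm_nonneg w) hw
  have hw2 : 0 ≤ 1 - ‖w‖ ^ 2 := by nlinarith [norm_nonneg w]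
  have hz2 : 0 ≤ 1 - ‖z‖ ^ 2 := by nlinarith [norm_nonneg z]
  calc ‖(z + w) - conj (z + w) * (z * w)‖
      = ‖(1 - ‖w‖ ^ 2) • z + (1 - ‖z‖ ^ 2) • w‖ := by rw [add_sub_conj_add_mul_mul]
    _ ≤ (1 - ‖w‖ ^ 2) * ‖z‖ + (1 - ‖z‖ ^ 2) * ‖w‖ := by
      refine (norm_add_le _ _).trans_eq ?_
      rw [norm_smul, norm_smul, Real.norm_of_nonneg hw2, Real.norm_of_nonneg hz2]
    _ ≤ 1 - ‖z * w‖ ^ 2 := by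
      have := one_sub_mul_sq_sub_eq ‖z‖ ‖w‖
      rw [norm_mul]
      nlinarith [mul_nonneg (mul_nonneg (sub_nonneg.2 hz) (sub_nonneg.2 hw)) (sub_nonneg.2 hzw)]

theorem norm_mul_norm_eq_one_of_one_lt {z w : ℂ} (hwz : ‖w‖ ≤ ‖z‖) (hz : 1 < ‖z‖)
    (h : ‖(z + w) - conj (z + w) * (z * w)‖ ≤ 1 - ‖z * w‖ ^ 2) :
    ‖z‖ * ‖w‖ = 1 ∧ ‖w‖ < 1 := by
  rw [norm_mul] at h
  have hzw : ‖z‖ * ‖w‖ ≤ 1 := by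
    nlinarith [(norm_nonneg _).trans h, mul_nonneg (norm_nonneg z) (norm_nonneg w)]
  have hw : ‖w‖ < 1 := by nlinarith [norm_nonneg w]
  have hreverse : (1 - ‖w‖ ^ 2) * ‖z‖ + (1 - ‖z‖ ^ 2) * ‖w‖
      ≤ ‖(z + w) - conj (z + w) * (z * w)‖ := by
    have := norm_le_add_norm_add ((1 - ‖w‖ ^ 2) • z) ((1 - ‖z‖ ^ 2) • w)
    rw [norm_smul, norm_smul, Real.norm_of_nonneg (by nlinarith [norm_nonneg w]),
      Real.norm_of_nonpos (by nlinarith), ← add_sub_conj_add_mul_mul] at this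
    linarith
  have := one_sub_mul_sq_sub_eq ‖z‖ ‖w‖
  refine ⟨le_antisymm hzw ?_, hw⟩
  nlinarith [mul_pos (sub_pos.2 hz) (sub_pos.2 hw)]

theorem two_lt_norm_add_of_sub_conj_mul_eq_zero {z w : ℂ} (hz : 1 < ‖z‖) (hw : ‖w‖ < 1)
    (hzw : ‖z‖ * ‖w‖ = 1) (h : (z + w) - conj (z + w) * (z * w) = 0) : 2 < ‖z + w‖ := by
  rw [add_sub_conj_add_mul_mul, add_eq_zero_iff_eq_neg, ← neg_smul, neg_sub] at h
  have hray : SameRay ℝ z w :=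
    Or.inr (Or.inr ⟨_, _, by nlinarith [norm_nonneg w], by nlinarith, h⟩)
  rw [hray.norm_add]
  nlinarith [mul_pos (sub_pos.2 hz) (sub_pos.2 hw)]

theorem norm_le_one_of_norm_le {z w : ℂ} (hwz : ‖w‖ ≤ ‖z‖) (hs : ‖z + w‖ ≤ 2)
    (h : ‖(z + w) - conj (z + w) * (z * w)‖ ≤ 1 - ‖z * w‖ ^ 2) : ‖z‖ ≤ 1 := by
  by_contra! hz
  obtain ⟨hzw, hw⟩ := norm_mul_norm_eq_one_of_one_lt hwz hz h
  rw [norm_mul, hzw, one_pow, sub_self, norm_le_zero_iff] at h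
  exact (two_lt_norm_add_of_sub_conj_mul_eq_zero hz hw hzw h).not_ge hs

theorem mem_Gamma_iff (s p : ℂ) :
    (s, p) ∈ symGamma ↔
      ‖s‖ ≤ 2 ∧ ‖s - conj s * p‖ ≤ 1 - ‖p‖ ^ 2 := by
  constructor
  · rintro ⟨z, w, hz, hw, hzw⟩
    obtain ⟨rfl, rfl⟩ := Prod.ext_iff.mp hzw
    exact ⟨(norm_add_le z w).trans (by linarith), norm_add_sub_conj_mul_le hz hw⟩
  · rintro ⟨hs, h⟩
    obtain ⟨z, w, rfl, rfl⟩ := exists_add_eq_and_mul_eq s p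
    rcases le_total ‖w‖ ‖z‖ with hwz | hzw
    · have hz := norm_le_one_of_norm_le hwz hs h
      exact ⟨z, w, hz, hwz.trans hz, rfl⟩
    · rw [add_comm z w] at hs h
      rw [mul_comm z w] at h
      have hw := norm_le_one_of_norm_le hzw hs h
      exact ⟨z, w, hzw.trans hw, hw, rfl⟩
end

section
/- A point (s,p) ∈ ℂ² lies in the set bΓ = {(z+w, zw) : |z| = |w| = 1} if and only if |s| ≤ 2, |p| = 1, and s - conj(s)·p = 0. -/
open Complex ComplexConjugate

/-- The distinguished boundary of the symmetrized bidisc. -/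
def bGamma : Set (ℂ × ℂ) :=
  {x | ∃ z w : ℂ, ‖z‖ = 1 ∧ ‖w‖ = 1 ∧ x = (z + w, z * w)}

/-!
Writing `p = μ²` with `|μ| = 1`, the condition `s = conj s * p` says exactly that `conj μ * s`
is a real number `a`, and then `|a| = |s| ≤ 2`. The real points `(a, 1)` with `|a| ≤ 2` are
`(ζ + conj ζ, ζ * conj ζ)` for `ζ = exp (i arccos (a / 2))`, and `bΓ` is invariant under
`(s, p) ↦ (μ s, μ² p)`, so `(s, p) = (μ a, μ² * 1) ∈ bΓ`.
-/

theorem Complex.conj_mul_self_of_norm_eq_one {z : ℂ} (hz : ‖z‖ = 1) : conj z * z = 1 := by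
  simp [Complex.conj_mul', hz]

theorem norm_add_le_two_of_norm_eq_one {z w : ℂ} (hz : ‖z‖ = 1) (hw : ‖w‖ = 1) :
    ‖z + w‖ ≤ 2 :=
  (norm_add_le z w).trans_eq (by rw [hz, hw]; norm_num)

theorem add_sub_conj_add_mul_mul_eq_zero {z w : ℂ} (hz : ‖z‖ = 1) (hw : ‖w‖ = 1) :
    z + w - conj (z + w) * (z * w) = 0 := by
  have hzz := Complex.conj_mul_self_of_norm_eq_one hz
  have hww := Complex.conj_mul_self_of_norm_eq_one hw
  rw [map_add]
  linear_combination (-w) * hzz - z * hww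

theorem exists_norm_eq_one_sq_eq {p : ℂ} (hp : ‖p‖ = 1) : ∃ μ : ℂ, ‖μ‖ = 1 ∧ μ ^ 2 = p := by
  obtain ⟨μ, hμ⟩ := IsAlgClosed.exists_pow_nat_eq p two_pos
  refine ⟨μ, ?_, hμ⟩
  rw [← pow_eq_one_iff_of_nonneg (norm_nonneg μ) two_ne_zero, ← norm_pow, hμ, hp]

theorem exists_real_eq_mul_of_eq_conj_mul_sq {s μ : ℂ} (hμ : ‖μ‖ = 1)
    (hs : s = conj s * μ ^ 2) : ∃ a : ℝ, s = μ * a := by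
  have hμμ := Complex.conj_mul_self_of_norm_eq_one hμ
  have hreal : conj (conj μ * s) = conj μ * s := by
    rw [map_mul, Complex.conj_conj]
    linear_combination (-(conj s * μ)) * hμμ - conj μ * hs
  refine ⟨(conj μ * s).re, ?_⟩
  rw [Complex.conj_eq_iff_re.mp hreal]
  linear_combination (-s) * hμμ

theorem exists_norm_eq_one_add_conj_eq {a : ℝ} (ha : |a| ≤ 2) :
    ∃ ζ : ℂ, ‖ζ‖ = 1 ∧ ζ + conj ζ = a := by
  obtain ⟨ha₁, ha₂⟩ := abs_le.mp ha
  refine ⟨exp (Real.arccos (a / 2) * I), Complex.norm_exp_ofReal_mul_I _, ?_⟩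
  rw [Complex.add_conj, Complex.exp_ofReal_mul_I_re, Real.cos_arccos (by linarith) (by linarith)]
  push_cast
  ring

theorem real_one_mem_bGamma {a : ℝ} (ha : |a| ≤ 2) : ((a : ℂ), (1 : ℂ)) ∈ bGamma := by
  obtain ⟨ζ, hζ, hζa⟩ := exists_norm_eq_one_add_conj_eq ha
  refine ⟨ζ, conj ζ, hζ, by rwa [Complex.norm_conj], ?_⟩
  rw [hζa, Complex.mul_conj', hζ]
  simp

theorem mul_mem_bGamma {μ s p : ℂ} (hμ : ‖μ‖ = 1) (h : (s, p) ∈ bGamma) :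
    (μ * s, μ ^ 2 * p) ∈ bGamma := by
  obtain ⟨z, w, hz, hw, hzw⟩ := h
  obtain ⟨rfl, rfl⟩ := Prod.ext_iff.mp hzw
  exact ⟨μ * z, μ * w, by simp [hμ, hz], by simp [hμ, hw], Prod.ext (by ring) (by ring)⟩

theorem mem_bGamma_iff (s p : ℂ) :
    (s, p) ∈ bGamma ↔
      ‖s‖ ≤ 2 ∧ ‖p‖ = 1 ∧ s - conj s * p = 0 := by
  constructor
  · rintro ⟨z, w, hz, hw, h⟩
    obtain ⟨rfl, rfl⟩ := Prod.ext_iff.mp h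
    exact ⟨norm_add_le_two_of_norm_eq_one hz hw, by simp [hz, hw],
      add_sub_conj_add_mul_mul_eq_zero hz hw⟩
  · rintro ⟨hs, hp, hsp⟩
    obtain ⟨μ, hμ, rfl⟩ := exists_norm_eq_one_sq_eq hp
    obtain ⟨a, rfl⟩ := exists_real_eq_mul_of_eq_conj_mul_sq hμ (sub_eq_zero.mp hsp)
    have ha : |a| ≤ 2 := by simpa [hμ] using hs
    simpa using mul_mem_bGamma hμ (real_one_mem_bGamma ha)
end

section
/- Let a, b, c, d, s₀, p₀ ∈ ℂ with |p₀| = 1, s₀ = conj(s₀)·p₀, s₀·c ≠ 2d, and |s₀| < 2. Define s = 2(2p₀c − s₀d)/(s₀c − 2d). Then |s| ≤ 2 if and only if |c| ≤ |d|. -/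
/-!
Write `s = 2A/B` with `A = 2p₀c - s₀d` and `B = s₀c - 2d`, so `|s| ≤ 2` iff `|A| ≤ |B|`.
Expanding `|z|² = z * conj z`, the cross terms cancel because `p₀ * conj s₀ = s₀`, and `|p₀| = 1`
leaves `|A|² - |B|² = (4 - |s₀|²)(|c|² - |d|²)`, whose first factor is positive.
-/

open Complex ComplexConjugate

theorem norm_sq_sub_norm_sq_eq {p s c d : ℂ} (hp : ‖p‖ = 1) (hs : s = conj s * p) :
    ‖2 * p * c - s * d‖ ^ 2 - ‖s * c - 2 * d‖ ^ 2 = (4 - ‖s‖ ^ 2) * (‖c‖ ^ 2 - ‖d‖ ^ 2) := by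
  have hp_conj_p : p * conj p = 1 := by rw [mul_conj', hp]; norm_num
  have hp_conj_s : p * conj s = s := by rw [mul_comm, ← hs]
  have hconj_p_s : conj p * s = conj s := by simpa [mul_comm] using (congrArg conj hs).symm
  apply ofReal_injective
  push_cast
  simp only [← mul_conj', map_sub, map_mul, map_ofNat]
  linear_combination (4 * c * conj c) * hp_conj_p - (2 * c * conj d) * hp_conj_s - (2 * conj c * d) * hconj_p_s

theorem le_iff_le_of_sq_sub_sq_eq {x y u v k : ℝ} (hx : 0 ≤ x) (hy : 0 ≤ y) (hu : 0 ≤ u)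
    (hv : 0 ≤ v) (hk : 0 < k) (h : x ^ 2 - y ^ 2 = k * (u ^ 2 - v ^ 2)) : x ≤ y ↔ u ≤ v := by
  rw [← pow_le_pow_iff_left₀ hx hy two_ne_zero, ← pow_le_pow_iff_left₀ hu hv two_ne_zero,
    ← sub_nonpos, h, ← mul_zero k, mul_le_mul_iff_right₀ hk, sub_nonpos]

theorem abs_s_le_two_iff_general (c d s₀ p₀ : ℂ)
    (hp₀ : ‖p₀‖ = 1) (hs₀p₀ : s₀ = conj s₀ * p₀)
    (hcd : s₀ * c ≠ 2 * d) (hs₀ : ‖s₀‖ < 2)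
    (s : ℂ) (hs : s = 2 * (2 * p₀ * c - s₀ * d) / (s₀ * c - 2 * d)) :
    ‖s‖ ≤ 2 ↔ ‖c‖ ≤ ‖d‖ := by
  have hB : 0 < ‖s₀ * c - 2 * d‖ := norm_pos_iff.mpr (sub_ne_zero.mpr hcd)
  have hk : 0 < 4 - ‖s₀‖ ^ 2 := by nlinarith [norm_nonneg s₀]
  rw [hs, norm_div, norm_mul, norm_ofNat, div_le_iff₀ hB, mul_le_mul_iff_right₀ two_pos]
  exact le_iff_le_of_sq_sub_sq_eq (norm_nonneg _) hB.le (norm_nonneg _) (norm_nonneg _) hk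
    (norm_sq_sub_norm_sq_eq hp₀ hs₀p₀)

theorem abs_s_le_two_iff (a b c d s₀ p₀ : ℂ)
    (hp₀ : ‖p₀‖ = 1) (hs₀p₀ : s₀ = conj s₀ * p₀)
    (hcd : s₀ * c ≠ 2 * d) (hs₀ : ‖s₀‖ < 2)
    (s : ℂ) (hs : s = 2 * (2 * p₀ * c - s₀ * d) / (s₀ * c - 2 * d)) :
    ‖s‖ ≤ 2 ↔ ‖c‖ ≤ ‖d‖ :=
  abs_s_le_two_iff_general c d s₀ p₀ hp₀ hs₀p₀ hcd hs₀ s hs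
end

section
/- Let h = (s, p) be a rational Γ-inner function and σ ∈ 𝕋 a royal node of h, i.e. s(σ)² = 4p(σ). Then σ is a zero of the rational function s² − 4p of multiplicity at least 2, that is, (s² − 4p)(σ) = 0 and (s² − 4p)'(σ) = 0. -/
/-!
On the circle `|p| = 1` and `s = conj s * p`, so `conj p * (s² - 4p) = |s|² - 4`, a real function
which is `≤ 0` because `|s| ≤ 2`, and which vanishes at a royal node `σ = e^{iθ₀}`. Hence
`θ ↦ conj p(e^{iθ}) * (s² - 4p)(e^{iθ})` has a maximum at `θ₀`, so its derivative
`conj p(σ) * (s² - 4p)'(σ) * iσ` vanishes there (the term involving the derivative of `conj p`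
is multiplied by `(s² - 4p)(σ) = 0`). Since `p(σ) ≠ 0` and `σ ≠ 0`, `(s² - 4p)'(σ) = 0`.
-/

open Complex ComplexConjugate

theorem HasDerivAt.eq_zero_of_isLocalMax_re {φ : ℝ → ℂ} {D : ℂ} {x : ℝ} (hφ : HasDerivAt φ D x)
    (hreal : ∀ t, (φ t).im = 0) (hmax : IsLocalMax (fun t => (φ t).re) x) : D = 0 := by
  have hre : HasDerivAt (fun t => (φ t).re) D.re x := reCLM.hasFDerivAt.comp_hasDerivAt x hφ
  have him : HasDerivAt (fun t => (φ t).im) D.im x := imCLM.hasFDerivAt.comp_hasDerivAt x hφ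
  simp only [hreal] at him
  exact Complex.ext (hmax.hasDerivAt_eq_zero hre) (him.unique (hasDerivAt_const x 0))

theorem HasDerivAt.conj_mul_of_eq_zero {u v : ℝ → ℂ} {u' v' : ℂ} {x : ℝ}
    (hu : HasDerivAt u u' x) (hv : HasDerivAt v v' x) (hvx : v x = 0) :
    HasDerivAt (fun t => conj (u t) * v t) (conj (u x) * v') x := by
  have h : HasDerivAt (fun t => conj (u t) * v t) (conj u' * v x + conj (u x) * v') x :=
    hu.star.mul hv
  rwa [hvx, mul_zero, zero_add] at h

theorem HasDerivAt.comp_circleMap {g : ℂ → ℂ} {g' c : ℂ} {R θ : ℝ}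
    (hg : HasDerivAt g g' (circleMap c R θ)) :
    HasDerivAt (fun t => g (circleMap c R t)) (g' * (circleMap 0 R θ * I)) θ :=
  hg.comp θ (hasDerivAt_circleMap c R θ)

theorem Complex.conj_mul_sq_sub_four_mul {s p : ℂ} (hp : ‖p‖ = 1) (hsp : s = conj s * p) :
    conj p * (s ^ 2 - 4 * p) = ((‖s‖ ^ 2 - 4 : ℝ) : ℂ) := by
  have hpp : conj p * p = 1 := by rw [conj_mul', hp]; simp
  calc conj p * (s ^ 2 - 4 * p) = conj p * p * (conj s * s) - 4 * (conj p * p) := by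
        nth_rewrite 1 [sq, hsp]; ring
    _ = conj s * s - 4 := by rw [hpp]; ring
    _ = _ := by rw [conj_mul']; push_cast; ring

theorem royal_node_double_zero (s p : ℂ → ℂ)
    (hs : ∀ z : ℂ, ‖z‖ = 1 → DifferentiableAt ℂ s z)
    (hp : ∀ z : ℂ, ‖z‖ = 1 → DifferentiableAt ℂ p z)
    (hb : ∀ z : ℂ, ‖z‖ = 1 →
      ‖s z‖ ≤ 2 ∧ ‖p z‖ = 1 ∧ s z = conj (s z) * p z)
    (σ : ℂ) (hσ : ‖σ‖ = 1) (hroyal : (s σ) ^ 2 = 4 * p σ) :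
    (fun z => (s z) ^ 2 - 4 * p z) σ = 0 ∧
      deriv (fun z => (s z) ^ 2 - 4 * p z) σ = 0 := by
  set f : ℂ → ℂ := fun z => (s z) ^ 2 - 4 * p z
  have hfσ : f σ = 0 := sub_eq_zero.mpr hroyal
  refine ⟨hfσ, ?_⟩
  obtain ⟨θ₀, rfl⟩ : σ ∈ Set.range (circleMap 0 1) := by simpa using hσ
  have hc : ∀ t, ‖circleMap 0 1 t‖ = 1 := fun t => by simp
  have hf : HasDerivAt f (deriv f (circleMap 0 1 θ₀)) (circleMap 0 1 θ₀) :=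
    (((hs _ hσ).pow 2).sub ((hp _ hσ).const_mul 4)).hasDerivAt
  have hφ := ((hp _ hσ).hasDerivAt.comp_circleMap).conj_mul_of_eq_zero hf.comp_circleMap hfσ
  have hφ_eq : ∀ t, conj (p (circleMap 0 1 t)) * f (circleMap 0 1 t)
      = ((‖s (circleMap 0 1 t)‖ ^ 2 - 4 : ℝ) : ℂ) := fun t => by
    obtain ⟨-, hpt, hst⟩ := hb _ (hc t)
    exact conj_mul_sq_sub_four_mul hpt hst
  have hmax : IsLocalMax (fun t => (conj (p (circleMap 0 1 t)) * f (circleMap 0 1 t)).re) θ₀ :=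
    Filter.Eventually.of_forall fun t => by
      have hs_le := (hb _ (hc t)).1
      dsimp only
      rw [hfσ, mul_zero, zero_re, hφ_eq, ofReal_re]
      nlinarith [norm_nonneg (s (circleMap 0 1 t))]
  have hD := hφ.eq_zero_of_isLocalMax_re (fun t => by simp only [hφ_eq, ofReal_im]) hmax
  have hpσ : p (circleMap 0 1 θ₀) ≠ 0 := norm_ne_zero_iff.mp (by rw [(hb _ hσ).2.1]; norm_num)
  simpa [hpσ, circleMap_ne_center] using hD
end

section
/- Let a, b, c, d be rational functions (over ℂ) in one variable, let s₀, p₀ ∈ ℂ satisfy s₀² ≠ 4p₀, s₀c ≠ 2d (as rational functions), and s₀a − 2b + 2p₀c − s₀d = 0. Define rational functions s = 2(2p₀c − s₀d)/(s₀c − 2d) and p = (−2p₀a + s₀b)/(s₀c − 2d), and for a variable ω let ζ(ω) = (2ωp₀ − s₀)/(2 − ωs₀). Then, as rational functions in (ω, λ), (2ω·p(λ) − s(λ))/(2 − ω·s(λ)) = (a(λ)·ζ(ω) + b(λ))/(c(λ)·ζ(ω) + d(λ)). -/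
/-!
Both sides are values of linear fractional maps at `ω`: the left side of the map with matrix
`[[2p, -s], [-s, 2]]`, the right side of the composite of `[[a, b], [c, d]]` with
`[[2p₀, -s₀], [-s₀, 2]]`. Using `s₀ a - 2 b + 2 p₀ c - s₀ d = 0`, the product of these two
matrices is `(s₀ c - 2 d) / (-2)` times the first one, and proportional matrices define the
same map.
-/

open Complex ComplexConjugate

section LinFrac

variable {K : Type*} [Field K]

def linFrac (a b c d z : K) : K := (a * z + b) / (c * z + d)

theorem linFrac_smul {k : K} (hk : k ≠ 0) (a b c d z : K) :
    linFrac (k * a) (k * b) (k * c) (k * d) z = linFrac a b c d z := by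
  unfold linFrac
  rw [mul_assoc, mul_assoc, ← mul_add, ← mul_add]
  exact mul_div_mul_left _ _ hk

/-- When `c * linFrac α β γ δ z + d = 0`, both sides are the junk value `x / 0 = 0`. -/
theorem linFrac_linFrac (a b c d α β γ δ z : K) (h : γ * z + δ ≠ 0) :
    linFrac a b c d (linFrac α β γ δ z) =
      linFrac (a * α + b * γ) (a * β + b * δ) (c * α + d * γ) (c * β + d * δ) z := by
  have expand : ∀ e f : K, e * linFrac α β γ δ z + f =
      ((e * α + f * γ) * z + (e * β + f * δ)) / (γ * z + δ) := by
    intro e f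
    rw [linFrac, mul_div_assoc', div_add' _ _ _ h]
    ring
  rw [linFrac, expand, expand, div_div_div_cancel_right₀ h, linFrac]

end LinFrac

theorem lin_frac_identity_general (a b c d s₀ p₀ ω : ℂ)
    (hcd : s₀ * c ≠ 2 * d)
    (hlin : s₀ * a - 2 * b + 2 * p₀ * c - s₀ * d = 0)
    (s p ζ : ℂ)
    (hs : s = 2 * (2 * p₀ * c - s₀ * d) / (s₀ * c - 2 * d))
    (hp : p = (-2 * p₀ * a + s₀ * b) / (s₀ * c - 2 * d))
    (hζ : ζ = (2 * ω * p₀ - s₀) / (2 - ω * s₀))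
    (hden₁ : 2 - ω * s₀ ≠ 0) :
    (2 * ω * p - s) / (2 - ω * s) = (a * ζ + b) / (c * ζ + d) := by
  have hD : s₀ * c - 2 * d ≠ 0 := sub_ne_zero.mpr hcd
  have hζ_den : -s₀ * ω + 2 ≠ 0 := by convert hden₁ using 1; ring
  set k := -2 / (s₀ * c - 2 * d) with hk_def
  have hk : k ≠ 0 := div_ne_zero (by norm_num) hD
  have h_top_left : 2 * p = k * (a * (2 * p₀) + b * -s₀) := by
    rw [hp, hk_def]; field_simp; ring
  have h_bottom_left : -s = k * (c * (2 * p₀) + d * -s₀) := by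
    rw [hs, hk_def]; field_simp; ring
  have h_top_right : -s = k * (a * -s₀ + b * 2) := by
    rw [h_bottom_left]; linear_combination k * hlin
  have h_bottom_right : 2 = k * (c * -s₀ + d * 2) := by
    rw [hk_def]; field_simp; ring
  calc (2 * ω * p - s) / (2 - ω * s)
      = linFrac (2 * p) (-s) (-s) 2 ω := by rw [linFrac]; ring_nf
    _ = linFrac (k * (a * (2 * p₀) + b * -s₀)) (k * (a * -s₀ + b * 2))
          (k * (c * (2 * p₀) + d * -s₀)) (k * (c * -s₀ + d * 2)) ω := by
        rw [← h_top_left, ← h_top_right, ← h_bottom_left, ← h_bottom_right]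
    _ = linFrac a b c d (linFrac (2 * p₀) (-s₀) (-s₀) 2 ω) := by
        rw [linFrac_smul hk, linFrac_linFrac _ _ _ _ _ _ _ _ _ hζ_den]
    _ = (a * ζ + b) / (c * ζ + d) := by rw [hζ, linFrac, linFrac]; ring_nf

theorem lin_frac_identity (a b c d s₀ p₀ ω : ℂ)
    (h4p : s₀ ^ 2 ≠ 4 * p₀) (hcd : s₀ * c ≠ 2 * d)
    (hlin : s₀ * a - 2 * b + 2 * p₀ * c - s₀ * d = 0)
    (s p ζ : ℂ)
    (hs : s = 2 * (2 * p₀ * c - s₀ * d) / (s₀ * c - 2 * d))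
    (hp : p = (-2 * p₀ * a + s₀ * b) / (s₀ * c - 2 * d))
    (hζ : ζ = (2 * ω * p₀ - s₀) / (2 - ω * s₀))
    (hden₁ : 2 - ω * s₀ ≠ 0) (hden₂ : 2 - ω * s ≠ 0) (hden₃ : c * ζ + d ≠ 0) :
    (2 * ω * p - s) / (2 - ω * s) = (a * ζ + b) / (c * ζ + d) :=
  lin_frac_identity_general a b c d s₀ p₀ ω hcd hlin s p ζ hs hp hζ hden₁
end

section
/- Suppose (s₁, p₁) ∈ Γ and there exist two distinct points ω₁, ω₂ ∈ 𝕋 such that |Φ_{ω_i}(s₁, p₁)| = 1 for i = 1, 2, where Φ_ω(s,p) = (2ωp − s)/(2 − ωs). Then (s₁, p₁) ∈ bΓ, i.e. |p₁| = 1 and s₁ = conj(s₁)·p₁. -/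
/-! Write `u = s - s̄ p`. On `Γ` one has `|u| ≤ 1 - |p|²`, while `|Φ_ω(s, p)| = 1` with `|ω| = 1`
forces `Re (ω u) = 1 - |p|²`; together these pin `ω u` to the real number `1 - |p|²`.
Two distinct `ω` then give `u = 0`, whence `|p| = 1` and `s = s̄ p`. -/

open Complex ComplexConjugate

noncomputable def Phi (ω s p : ℂ) : ℂ := (2 * ω * p - s) / (2 - ω * s)

lemma norm_sub_conj_mul_le_of_mem_symGamma {s p : ℂ} (h : (s, p) ∈ symGamma) :
    ‖s - conj s * p‖ ≤ 1 - ‖p‖ ^ 2 := by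
  obtain ⟨z, w, hz, hw, hzw⟩ := h
  obtain ⟨rfl, rfl⟩ := Prod.ext_iff.1 hzw
  have hdecomp : z + w - conj (z + w) * (z * w)
      = z * ((1 - ‖w‖ ^ 2 : ℝ) : ℂ) + w * ((1 - ‖z‖ ^ 2 : ℝ) : ℂ) := by
    push_cast
    rw [← mul_conj' z, ← mul_conj' w, map_add]
    ring
  have hw' : 0 ≤ 1 - ‖w‖ ^ 2 := by nlinarith [norm_nonneg w]
  have hz' : 0 ≤ 1 - ‖z‖ ^ 2 := by nlinarith [norm_nonneg z]
  calc ‖z + w - conj (z + w) * (z * w)‖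
      ≤ ‖z‖ * (1 - ‖w‖ ^ 2) + ‖w‖ * (1 - ‖z‖ ^ 2) := by
        rw [hdecomp]
        refine (norm_add_le _ _).trans_eq ?_
        rw [norm_mul, norm_mul, norm_real, norm_real, Real.norm_of_nonneg hw',
          Real.norm_of_nonneg hz']
    _ ≤ 1 - ‖z * w‖ ^ 2 := by
        -- the difference is `(1 - |z|)(1 - |w|)(1 - |z||w|)`
        rw [norm_mul]
        nlinarith [mul_nonneg (mul_nonneg (sub_nonneg.2 hz) (sub_nonneg.2 hw))
          (sub_nonneg.2 (mul_le_one₀ hz (norm_nonneg w) hw))]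

lemma re_mul_sub_conj_mul_of_norm_Phi_eq_one {ω s p : ℂ} (hω : ‖ω‖ = 1)
    (hΦ : ‖Phi ω s p‖ = 1) : (ω * (s - conj s * p)).re = 1 - ‖p‖ ^ 2 := by
  have hden : 2 - ω * s ≠ 0 := by
    rintro h0
    simp [Phi, h0] at hΦ
  have hnorm : normSq (2 * ω * p - s) = normSq (2 - ω * s) := by
    rw [Phi, norm_div, div_eq_one_iff_eq (norm_ne_zero_iff.2 hden)] at hΦ
    rw [← Complex.sq_norm, ← Complex.sq_norm, hΦ]
  have hω' : normSq ω = 1 := by rw [← Complex.sq_norm, hω, one_pow]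
  rw [Complex.sq_norm]
  simp only [normSq_apply, mul_re, mul_im, sub_re, sub_im, conj_re, conj_im, re_ofNat,
    im_ofNat] at hnorm hω' ⊢
  -- expanding `|2ωp - s|² = |2 - ωs|²` with `|ω| = 1` gives `Re (ωs) - Re (ω s̄ p) = 1 - |p|²`
  linear_combination (1 / 4 : ℝ) * hnorm + ((s.re ^ 2 + s.im ^ 2) / 4 - (p.re ^ 2 + p.im ^ 2)) * hω'

lemma mul_sub_conj_mul_of_norm_Phi_eq_one {ω s p : ℂ} (h : (s, p) ∈ symGamma) (hω : ‖ω‖ = 1)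
    (hΦ : ‖Phi ω s p‖ = 1) : ω * (s - conj s * p) = ((1 - ‖p‖ ^ 2 : ℝ) : ℂ) := by
  set x := ω * (s - conj s * p)
  have hre := re_mul_sub_conj_mul_of_norm_Phi_eq_one hω hΦ
  have hle : ‖x‖ ≤ x.re := by
    rw [hre, norm_mul, hω, one_mul]
    exact norm_sub_conj_mul_le_of_mem_symGamma h
  have him : x.im = 0 :=
    abs_re_eq_norm.1 (le_antisymm (abs_re_le_norm x) (hle.trans (le_abs_self _)))
  rw [← hre]
  exact Complex.ext rfl (by simpa using him)

theorem mem_bGamma_of_two_Phi_unimodular (s₁ p₁ : ℂ)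
    (h : (s₁, p₁) ∈ symGamma) (ω₁ ω₂ : ℂ)
    (hω₁ : ‖ω₁‖ = 1) (hω₂ : ‖ω₂‖ = 1) (hne : ω₁ ≠ ω₂)
    (h₁ : ‖(2 * ω₁ * p₁ - s₁) / (2 - ω₁ * s₁)‖ = 1)
    (h₂ : ‖(2 * ω₂ * p₁ - s₁) / (2 - ω₂ * s₁)‖ = 1) :
    ‖p₁‖ = 1 ∧ s₁ = conj s₁ * p₁ := by
  have e₁ := mul_sub_conj_mul_of_norm_Phi_eq_one h hω₁ h₁
  have e₂ := mul_sub_conj_mul_of_norm_Phi_eq_one h hω₂ h₂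
  have hu : s₁ - conj s₁ * p₁ = 0 := by
    have : (ω₁ - ω₂) * (s₁ - conj s₁ * p₁) = 0 := by rw [sub_mul, e₁, e₂, sub_self]
    exact (mul_eq_zero.1 this).resolve_left (sub_ne_zero.2 hne)
  rw [hu, mul_zero, eq_comm, ofReal_eq_zero, sub_eq_zero, eq_comm,
    pow_eq_one_iff_of_nonneg (norm_nonneg p₁) two_ne_zero] at e₁
  exact ⟨e₁, sub_eq_zero.1 hu⟩
end

section
/- For ω ∈ 𝕋 and (s,p) ∈ Γ with ωs ≠ 2, define Φ_ω(s,p) = (2ωp − s)/(2 − ωs). Then |Φ_ω(s,p)| ≤ 1. -/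
open Complex ComplexConjugate

/-!
Rotating by `ω` maps `Γ` into itself via `(s, p) ↦ (ω s, ω² p)`, which reduces the claim to
`ω = 1`, i.e. `|2zw - z - w| ≤ |2 - z - w|` on the closed bidisc. That follows from the identity
`|2 - z - w|² - |2zw - z - w|² = 2(1 - |z|²)|1 - w|² + 2(1 - |w|²)|1 - z|²`.
-/

lemma normSq_two_sub_sub (z w : ℂ) :
    normSq (2 - z - w) = normSq (2 * z * w - z - w)
      + 2 * (1 - normSq z) * normSq (1 - w) + 2 * (1 - normSq w) * normSq (1 - z) := by
  simp only [normSq_apply, sub_re, sub_im, mul_re, mul_im, one_re, one_im, re_ofNat, im_ofNat]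
  ring

lemma norm_two_mul_mul_sub_sub_le {z w : ℂ} (hz : ‖z‖ ≤ 1) (hw : ‖w‖ ≤ 1) :
    ‖2 * z * w - z - w‖ ≤ ‖2 - z - w‖ := by
  have hz' : normSq z ≤ 1 := by rw [normSq_eq_norm_sq]; exact pow_le_one₀ (norm_nonneg z) hz
  have hw' : normSq w ≤ 1 := by rw [normSq_eq_norm_sq]; exact pow_le_one₀ (norm_nonneg w) hw
  refine (sq_le_sq₀ (norm_nonneg _) (norm_nonneg _)).mp ?_
  rw [← normSq_eq_norm_sq, ← normSq_eq_norm_sq, normSq_two_sub_sub z w]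
  have := normSq_nonneg (1 - z)
  have := normSq_nonneg (1 - w)
  nlinarith

lemma norm_two_mul_sub_le_of_mem_symGamma {s p : ℂ} (h : (s, p) ∈ symGamma) :
    ‖2 * p - s‖ ≤ ‖2 - s‖ := by
  obtain ⟨z, w, hz, hw, hzw⟩ := h
  obtain ⟨rfl, rfl⟩ := Prod.mk.inj hzw
  simpa only [mul_assoc, sub_add_eq_sub_sub] using norm_two_mul_mul_sub_sub_le hz hw

lemma mul_mem_symGamma {ω s p : ℂ} (hω : ‖ω‖ ≤ 1) (h : (s, p) ∈ symGamma) :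
    (ω * s, ω ^ 2 * p) ∈ symGamma := by
  obtain ⟨z, w, hz, hw, hzw⟩ := h
  obtain ⟨rfl, rfl⟩ := Prod.mk.inj hzw
  refine ⟨ω * z, ω * w, ?_, ?_, by ext <;> ring⟩ <;>
    rw [norm_mul] <;> exact mul_le_one₀ hω (norm_nonneg _) ‹_›

theorem abs_Phi_le_one_general (ω s p : ℂ) (hω : ‖ω‖ = 1)
    (h : (s, p) ∈ symGamma) :
    ‖(2 * ω * p - s) / (2 - ω * s)‖ ≤ 1 := by
  have hrot := norm_two_mul_sub_le_of_mem_symGamma (mul_mem_symGamma hω.le h)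
  have hnum : ‖2 * (ω ^ 2 * p) - ω * s‖ = ‖2 * ω * p - s‖ := by
    rw [show 2 * (ω ^ 2 * p) - ω * s = ω * (2 * ω * p - s) by ring, norm_mul, hω, one_mul]
  rw [norm_div]
  exact div_le_one_of_le₀ (hnum ▸ hrot) (norm_nonneg _)

theorem abs_Phi_le_one (ω s p : ℂ) (hω : ‖ω‖ = 1)
    (h : (s, p) ∈ symGamma) (hden : ω * s ≠ 2) :
    ‖(2 * ω * p - s) / (2 - ω * s)‖ ≤ 1 :=
  abs_Phi_le_one_general ω s p hω h
end
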